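/- arXiv:2509.10613 — 2 statements merged into one kernel-verified Lean document; each statement's English description precedes it below -/
import Mathlib

section
/- (Chen's identity.) Let x : [a,b] → ℝ^d and y : [b,c] → ℝ^d be C¹ paths with x_b = y_b, and let x * y : [a,c] → ℝ^d denote their concatenation. Then for every n ≥ 0, the level-n signature of the concatenation satisfies S(x * y)^{(n)}_{[a,c]} = Σ_{i+j=n} S(x)^{(i)}_{[a,b]} ⊗ S(y)^{(j)}_{[b,c]}. -/
open MeasureTheory

/-- Coordinates (in the standard tensor basis, i.e. indexed by words over the
alphabet `Fin d`) of the iterated-integral signature of a path `x` over the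
interval `[a, b]`.  `sigCoord x b w a` is the coordinate indexed by the word
`w` of the signature of `x` over `[a, b]`:
`∫_{a < t₁ < ⋯ < t_k < b} x'_{w₁}(t₁) ⋯ x'_{w_k}(t_k)`.
The empty word gives the level-0 signature `1`. -/
noncomputable def sigCoord {d : ℕ} (x : ℝ → Fin d → ℝ) (b : ℝ) :
    List (Fin d) → ℝ → ℝ
  | [], _ => 1
  | i :: w, a => ∫ u in a..b, deriv (fun s => x s i) u * sigCoord x b w u

/-! Induction on the word: the outermost integral `∫_u^c` of the concatenation splits at `b`.
On `[b, c]` it is the outermost integral for `y`; on `[u, b]` the induction hypothesis expands the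
inner coordinate into the Chen sum, and integrating term by term prepends the letter to the
`x`-factors. Only almost-everywhere values of the derivative enter, so the corner at `b` is
harmless: it suffices that the concatenation has integrable derivative, and away from `b` it agrees
locally with `x` or with `y`. -/

open Set

section Calculus

variable {a b : ℝ}

theorem ContDiffOn.continuousOn_derivWithin_Icc {f : ℝ → ℝ} (hab : a ≤ b)
    (hf : ContDiffOn ℝ 1 f (Icc a b)) : ContinuousOn (derivWithin f (Icc a b)) (Icc a b) := by
  rcases hab.eq_or_lt with rfl | hlt
  · simp [continuousOn_singleton]
  · exact hf.continuousOn_derivWithin (uniqueDiffOn_Icc hlt) le_rfl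

theorem intervalIntegrable_deriv_of_eqOn {f g : ℝ → ℝ} (hab : a ≤ b)
    (hf : ContDiffOn ℝ 1 f (Icc a b)) (hgf : EqOn g f (Ioo a b)) :
    IntervalIntegrable (deriv g) volume a b := by
  have hint : IntervalIntegrable (derivWithin f (Icc a b)) volume a b :=
    (hf.continuousOn_derivWithin_Icc hab).intervalIntegrable_of_Icc hab
  refine hint.congr_uIoo fun t ht => ?_
  rw [uIoo_of_le hab] at ht
  rw [derivWithin_of_mem_nhds (Icc_mem_nhds ht.1 ht.2), hgf.deriv isOpen_Ioo ht]

theorem intervalIntegrable_deriv_apply_of_eqOn {ι : Type*} [Fintype ι] {x z : ℝ → ι → ℝ}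
    (hab : a ≤ b) (hx : ContDiffOn ℝ 1 x (Icc a b)) (hzx : EqOn z x (Ioo a b)) (i : ι) :
    IntervalIntegrable (deriv fun s => z s i) volume a b :=
  intervalIntegrable_deriv_of_eqOn hab (contDiffOn_pi.mp hx i) fun _ ht => congrFun (hzx ht) i

end Calculus

section Signature

variable {d : ℕ} {a b c : ℝ}

theorem sigCoord_nil (x : ℝ → Fin d → ℝ) (b u : ℝ) : sigCoord x b [] u = 1 := rfl

theorem sigCoord_cons (x : ℝ → Fin d → ℝ) (b : ℝ) (i : Fin d) (w : List (Fin d)) (u : ℝ) :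
    sigCoord x b (i :: w) u = ∫ t in u..b, deriv (fun s => x s i) t * sigCoord x b w t := rfl

theorem sigCoord_congr_of_eqOn {x y : ℝ → Fin d → ℝ} (h : EqOn x y (Ioo a b)) :
    ∀ (w : List (Fin d)), ∀ u ∈ Icc a b, sigCoord x b w u = sigCoord y b w u := by
  intro w
  induction w with
  | nil => intro u _; rfl
  | cons i w ih =>
    intro u hu
    have hb : b ∈ Icc a b := ⟨hu.1.trans hu.2, le_rfl⟩
    refine intervalIntegral.integral_congr_uIoo fun t ht => ?_
    have ht' : t ∈ Ioo a b := uIoo_subset_Ioo hu hb ht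
    have hderiv : EqOn (fun s => x s i) (fun s => y s i) (Ioo a b) := fun s hs => congrFun (h hs) i
    simp only [hderiv.deriv isOpen_Ioo ht', ih t (Ioo_subset_Icc_self ht')]

variable {x : ℝ → Fin d → ℝ}

theorem continuousOn_sigCoord (hx : ∀ i, IntervalIntegrable (deriv fun s => x s i) volume a b) :
    ∀ w : List (Fin d), ContinuousOn (sigCoord x b w) (uIcc a b) := by
  intro w
  induction w with
  | nil => exact continuousOn_const
  | cons i w ih =>
    have hint := (intervalIntegrable_iff').1 ((hx i).mul_continuousOn ih)
    exact intervalIntegral.continuousOn_primitive_interval_left hint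

theorem intervalIntegrable_deriv_mul_sigCoord
    (hx : ∀ i, IntervalIntegrable (deriv fun s => x s i) volume a b) (i : Fin d)
    (w : List (Fin d)) {u v : ℝ} (hu : u ∈ uIcc a b) (hv : v ∈ uIcc a b) :
    IntervalIntegrable (fun t => deriv (fun s => x s i) t * sigCoord x b w t) volume u v :=
  ((hx i).mul_continuousOn (continuousOn_sigCoord hx w)).mono_set (uIcc_subset_uIcc hu hv)

/-- Chen's identity for a single path, split at an intermediate point `b`. -/
theorem sigCoord_eq_sum_take_mul_drop (hb : b ∈ uIcc a c)
    (hx : ∀ i, IntervalIntegrable (deriv fun s => x s i) volume a c) :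
    ∀ (w : List (Fin d)), ∀ u ∈ uIcc a b,
      sigCoord x c w u = ∑ i ∈ Finset.range (w.length + 1),
        sigCoord x b (w.take i) u * sigCoord x c (w.drop i) b := by
  have hab : uIcc a b ⊆ uIcc a c := uIcc_subset_uIcc_left hb
  have hx' (i : Fin d) : IntervalIntegrable (deriv fun s => x s i) volume a b :=
    (hx i).mono_set hab
  intro w
  induction w with
  | nil => intro u _; simp [sigCoord_nil]
  | cons j w ih =>
    intro u hu
    set C : ℕ → ℝ := fun i => sigCoord x c (w.drop i) b
    have hsplit := intervalIntegral.integral_add_adjacent_intervals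
      (intervalIntegrable_deriv_mul_sigCoord hx j w (hab hu) hb)
      (intervalIntegrable_deriv_mul_sigCoord hx j w hb right_mem_uIcc)
    have hleft : ∫ t in u..b, deriv (fun s => x s j) t * sigCoord x c w t
        = ∑ i ∈ Finset.range (w.length + 1), sigCoord x b (j :: w.take i) u * C i := by
      calc ∫ t in u..b, deriv (fun s => x s j) t * sigCoord x c w t
          = ∫ t in u..b, ∑ i ∈ Finset.range (w.length + 1),
              deriv (fun s => x s j) t * sigCoord x b (w.take i) t * C i := by
            refine intervalIntegral.integral_congr fun t ht => ?_
            rw [ih t (uIcc_subset_uIcc hu right_mem_uIcc ht), Finset.mul_sum]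
            simp only [C, mul_assoc]
        _ = ∑ i ∈ Finset.range (w.length + 1), sigCoord x b (j :: w.take i) u * C i := by
            rw [intervalIntegral.integral_finsetSum fun i _ =>
              (intervalIntegrable_deriv_mul_sigCoord hx' j _ hu right_mem_uIcc).mul_const _]
            simp only [intervalIntegral.integral_mul_const, sigCoord_cons]
    rw [sigCoord_cons, ← hsplit, hleft, List.length_cons, Finset.sum_range_succ' _ (w.length + 1)]
    simp [C, sigCoord_nil, sigCoord_cons, add_comm]

end Signature

theorem chen_identity_general {d : ℕ} (a b c : ℝ) (hab : a ≤ b) (hbc : b ≤ c)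
    (x y : ℝ → Fin d → ℝ)
    (hx : ContDiffOn ℝ 1 x (Set.Icc a b)) (hy : ContDiffOn ℝ 1 y (Set.Icc b c))
    (z : ℝ → Fin d → ℝ) (hz : z = fun t => if t ≤ b then x t else y t) :
    ∀ (n : ℕ) (w : List (Fin d)), w.length = n →
      sigCoord z c w a =
        ∑ i ∈ Finset.range (n + 1),
          sigCoord x b (w.take i) a * sigCoord y c (w.drop i) b := by
  rintro n w rfl
  have hzx : EqOn z x (Ioo a b) := fun t ht => by simp [hz, ht.2.le]
  have hzy : EqOn z y (Ioo b c) := fun t ht => by simp [hz, not_le.mpr ht.1]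
  have hz' (i : Fin d) : IntervalIntegrable (deriv fun s => z s i) volume a c :=
    (intervalIntegrable_deriv_apply_of_eqOn hab hx hzx i).trans
      (intervalIntegrable_deriv_apply_of_eqOn hbc hy hzy i)
  rw [sigCoord_eq_sum_take_mul_drop (mem_uIcc_of_le hab hbc) hz' w a left_mem_uIcc]
  refine Finset.sum_congr rfl fun i _ => ?_
  rw [sigCoord_congr_of_eqOn hzx _ a (left_mem_Icc.2 hab),
    sigCoord_congr_of_eqOn hzy _ b (left_mem_Icc.2 hbc)]

/-- **Chen's identity.**  Let `x` be a C¹ path on `[a, b]` and `y` a C¹ path on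
`[b, c]` with `x b = y b`, and let `z = x * y` be their concatenation on
`[a, c]`.  Then for every `n ≥ 0`,
`S(x * y)^{(n)}_{[a,c]} = Σ_{i+j=n} S(x)^{(i)}_{[a,b]} ⊗ S(y)^{(j)}_{[b,c]}`.
In coordinates: for every word `w` of length `n`, the coordinate of the
signature of the concatenation indexed by `w` is the sum over all splittings
`w = w₁ ++ w₂` (with `w₁ = w.take i`, `w₂ = w.drop i`) of the product of the
corresponding coordinates of `S(x)` and `S(y)`. -/
theorem chen_identity {d : ℕ} (a b c : ℝ) (hab : a ≤ b) (hbc : b ≤ c)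
    (x y : ℝ → Fin d → ℝ)
    (hx : ContDiffOn ℝ 1 x (Set.Icc a b)) (hy : ContDiffOn ℝ 1 y (Set.Icc b c))
    (hxy : x b = y b)
    (z : ℝ → Fin d → ℝ) (hz : z = fun t => if t ≤ b then x t else y t) :
    ∀ (n : ℕ) (w : List (Fin d)), w.length = n →
      sigCoord z c w a =
        ∑ i ∈ Finset.range (n + 1),
          sigCoord x b (w.take i) a * sigCoord y c (w.drop i) b :=
  chen_identity_general a b c hab hbc x y hx hy z hz
end

section
/- (Exactness of the adjoint recurrence for backpropagation through the signature-kernel finite-difference scheme.) Fix positive integers L₁, L₂ and let Δ ∈ ℝ^{L₁ × L₂} (indexed by 0 ≤ i ≤ L₁−1, 0 ≤ j ≤ L₂−1). Define A(p) = 1 + p/2 + p²/12 and B(p) = 1 − p²/12, and define the grid k̂ : {0,…,L₁} × {0,…,L₂} → ℝ by the boundary conditions k̂_{i,0} = k̂_{0,j} = 1 and the recurrence k̂_{i+1,j+1} = (k̂_{i+1,j} + k̂_{i,j+1})·A(Δ_{i,j}) − k̂_{i,j}·B(Δ_{i,j}). Define the adjoint grid g : {1,…,L₁+1} × {1,…,L₂+1}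 → ℝ by g_{L₁,L₂} = 1, g_{i,j} = 0 whenever i > L₁ or j > L₂ with (i,j) ≠ (L₁,L₂), and for (i,j) with 1 ≤ i ≤ L₁, 1 ≤ j ≤ L₂, (i,j) ≠ (L₁,L₂): g_{i,j} = g_{i+1,j}·A(Δ_{i,j−1}) + g_{i,j+1}·A(Δ_{i−1,j}) − g_{i+1,j+1}·B(Δ_{i,j}), where any summand whose g-factor is zero is omitted (so out-of-range Δ-indices never contribute). Then k̂_{L₁,L₂} is a polynomial function of the entries of Δ, and for all 0 ≤ a ≤ L₁−1, 0 ≤ b ≤ L₂−1, its partial derivative satisfies ∂k̂_{L₁,L₂}/∂Δ_{a,b} = g_{a+1,b+1} · [ (k̂_{a+1,b} + k̂_{a,b+1})·(1/2 + Δ_{a,b}/6) + k̂_{a,b}·Δ_{a,b}/6 ]. -/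
/-- `Afun p = 1 + p/2 + p²/12`, the first coefficient of the second-order
finite-difference scheme for the signature-kernel Goursat PDE. -/
noncomputable def Afun (p : ℝ) : ℝ := 1 + p / 2 + p ^ 2 / 12

/-- `Bfun p = 1 - p²/12`, the second coefficient of the second-order
finite-difference scheme for the signature-kernel Goursat PDE. -/
noncomputable def Bfun (p : ℝ) : ℝ := 1 - p ^ 2 / 12

/-- The finite-difference grid `k̂` for the signature-kernel Goursat PDE:
boundary values `k̂_{i,0} = k̂_{0,j} = 1` and recurrence
`k̂_{i+1,j+1} = (k̂_{i+1,j} + k̂_{i,j+1})·A(Δ_{i,j}) − k̂_{i,j}·B(Δ_{i,j})`. -/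
noncomputable def khat (Δ : ℕ → ℕ → ℝ) : ℕ → ℕ → ℝ
  | _, 0 => 1
  | 0, _ + 1 => 1
  | i + 1, j + 1 =>
      (khat Δ (i + 1) j + khat Δ i (j + 1)) * Afun (Δ i j) -
        khat Δ i j * Bfun (Δ i j)

/-- The adjoint grid `g` for reverse-mode differentiation of the
finite-difference scheme on the `{0,…,L₁} × {0,…,L₂}` grid:
`g_{L₁,L₂} = 1`, `g_{i,j} = 0` whenever `i > L₁` or `j > L₂` (with
`(i,j) ≠ (L₁,L₂)`), and otherwise
`g_{i,j} = g_{i+1,j}·A(Δ_{i,j−1}) + g_{i,j+1}·A(Δ_{i−1,j}) − g_{i+1,j+1}·B(Δ_{i,j})`,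
in which any summand whose `g`-factor vanishes contributes `0`, so that
out-of-range `Δ`-indices never contribute. -/
noncomputable def gAdj (Δ : ℕ → ℕ → ℝ) (L₁ L₂ : ℕ) (i j : ℕ) : ℝ :=
  if L₁ < i ∨ L₂ < j then 0
  else if i = L₁ ∧ j = L₂ then 1
  else
    gAdj Δ L₁ L₂ (i + 1) j * Afun (Δ i (j - 1)) +
      gAdj Δ L₁ L₂ i (j + 1) * Afun (Δ (i - 1) j) -
      gAdj Δ L₁ L₂ (i + 1) (j + 1) * Bfun (Δ i j)
termination_by (L₁ + L₂) - (i + j)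
decreasing_by all_goals omega

/-!
Reverse mode is exact because of a duality: as a function of its terminal corner `(L₁, L₂)`,
the adjoint grid `g^{L₁,L₂}_{s,t}` obeys the same recurrence as `k̂` (`gAdj_corner_succ_succ`).
Differentiating the recurrence of `k̂_{i,j}` in `Δ_{a,b}` therefore produces, by induction over the
grid, `g^{i,j}_{a+1,b+1}` times the source term `C_{a,b} = (k̂_{a+1,b} + k̂_{a,b+1}) A'(Δ_{a,b}) -
k̂_{a,b} B'(Δ_{a,b})`, which is injected once, at the cell `(a, b)` where `g^{a+1,b+1}` has its
corner value `1`.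
-/

open MvPolynomial

theorem hasDerivAt_Afun (x : ℝ) : HasDerivAt Afun (1 / 2 + x / 6) x :=
  (((hasDerivAt_const x 1).add ((hasDerivAt_id x).div_const 2)).add
    ((hasDerivAt_pow 2 x).div_const 12)).congr_deriv (by push_cast; ring)

theorem hasDerivAt_Bfun (x : ℝ) : HasDerivAt Bfun (-(x / 6)) x :=
  ((hasDerivAt_const x 1).sub ((hasDerivAt_pow 2 x).div_const 12)).congr_deriv
    (by push_cast; ring)

@[simp]
theorem khat_zero_right (Δ : ℕ → ℕ → ℝ) (i : ℕ) : khat Δ i 0 = 1 := by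
  cases i <;> rw [khat]

@[simp]
theorem khat_zero_left (Δ : ℕ → ℕ → ℝ) (j : ℕ) : khat Δ 0 j = 1 := by
  cases j <;> rw [khat]

theorem khat_succ_succ (Δ : ℕ → ℕ → ℝ) (i j : ℕ) :
    khat Δ (i + 1) (j + 1) =
      (khat Δ (i + 1) j + khat Δ i (j + 1)) * Afun (Δ i j) - khat Δ i j * Bfun (Δ i j) := by
  rw [khat]

theorem khat_exists_mvPolynomial {L₁ L₂ : ℕ} :
    ∀ i j, i ≤ L₁ → j ≤ L₂ → ∃ P : MvPolynomial (Fin L₁ × Fin L₂) ℝ,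
      ∀ Δ : ℕ → ℕ → ℝ, khat Δ i j = eval (fun p => Δ p.1.val p.2.val) P
  | _, 0, _, _ => ⟨1, by simp⟩
  | 0, _ + 1, _, _ => ⟨1, by simp⟩
  | i + 1, j + 1, hi, hj => by
    obtain ⟨P₁, hP₁⟩ := khat_exists_mvPolynomial (L₂ := L₂) (i + 1) j hi (by omega)
    obtain ⟨P₂, hP₂⟩ := khat_exists_mvPolynomial (L₁ := L₁) i (j + 1) (by omega) hj
    obtain ⟨P₃, hP₃⟩ := khat_exists_mvPolynomial (L₁ := L₁) (L₂ := L₂) i j (by omega) (by omega)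
    let x : MvPolynomial (Fin L₁ × Fin L₂) ℝ := X (⟨i, hi⟩, ⟨j, hj⟩)
    refine ⟨(P₁ + P₂) * (1 + C (1 / 2) * x + C (1 / 12) * x ^ 2) - P₃ * (1 - C (1 / 12) * x ^ 2),
      fun Δ => ?_⟩
    simp only [khat_succ_succ, hP₁, hP₂, hP₃, x, Afun, Bfun, map_add, map_sub, map_mul, map_one,
      map_pow, eval_C, eval_X]
    ring

section gAdj

variable (Δ : ℕ → ℕ → ℝ) {L₁ L₂ : ℕ}

@[simp]
theorem gAdj_of_lt_left {i : ℕ} (j : ℕ) (h : L₁ < i) : gAdj Δ L₁ L₂ i j = 0 := by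
  rw [gAdj, if_pos (Or.inl h)]

@[simp]
theorem gAdj_of_lt_right (i : ℕ) {j : ℕ} (h : L₂ < j) : gAdj Δ L₁ L₂ i j = 0 := by
  rw [gAdj, if_pos (Or.inr h)]

variable (L₁ L₂) in
@[simp]
theorem gAdj_corner : gAdj Δ L₁ L₂ L₁ L₂ = 1 := by
  rw [gAdj, if_neg (by omega), if_pos ⟨rfl, rfl⟩]

/-- Outside the grid both sides vanish. -/
theorem gAdj_eq_of_ne_corner {i j : ℕ} (h : ¬(i = L₁ ∧ j = L₂)) :
    gAdj Δ L₁ L₂ i j =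
      gAdj Δ L₁ L₂ (i + 1) j * Afun (Δ i (j - 1)) + gAdj Δ L₁ L₂ i (j + 1) * Afun (Δ (i - 1) j) -
        gAdj Δ L₁ L₂ (i + 1) (j + 1) * Bfun (Δ i j) := by
  by_cases hout : L₁ < i ∨ L₂ < j
  · rcases hout with hi | hj
    · simp [gAdj_of_lt_left, hi, Nat.lt_succ_of_lt hi]
    · simp [gAdj_of_lt_right, hj, Nat.lt_succ_of_lt hj]
  · rw [gAdj, if_neg hout, if_neg h]

end gAdj

theorem gAdj_corner_succ_succ (Δ : ℕ → ℕ → ℝ) (L₁ L₂ s t : ℕ)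
    (h : ¬(s = L₁ + 1 ∧ t = L₂ + 1)) :
    gAdj Δ (L₁ + 1) (L₂ + 1) s t =
      (gAdj Δ (L₁ + 1) L₂ s t + gAdj Δ L₁ (L₂ + 1) s t) * Afun (Δ L₁ L₂) -
        gAdj Δ L₁ L₂ s t * Bfun (Δ L₁ L₂) := by
  by_cases hout : L₁ + 1 < s ∨ L₂ + 1 < t
  · rcases hout with hs | ht
    · simp [hs, Nat.lt_of_succ_lt hs]
    · simp [ht, Nat.lt_of_succ_lt ht]
  by_cases hb : s = L₁ + 1 ∧ t = L₂
  · obtain ⟨rfl, rfl⟩ := hb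
    rw [gAdj_eq_of_ne_corner Δ h]
    simp
  by_cases hc : s = L₁ ∧ t = L₂ + 1
  · obtain ⟨rfl, rfl⟩ := hc
    rw [gAdj_eq_of_ne_corner Δ h]
    simp
  by_cases hd : s = L₁ ∧ t = L₂
  · obtain ⟨hs, ht⟩ := hd
    subst s t
    rw [gAdj_eq_of_ne_corner Δ h, gAdj_eq_of_ne_corner Δ hb, gAdj_eq_of_ne_corner Δ hc,
      gAdj_corner_succ_succ Δ L₁ L₂ (L₁ + 1) L₂ (by omega),
      gAdj_corner_succ_succ Δ L₁ L₂ L₁ (L₂ + 1) (by omega)]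
    simp
    ring
  rw [gAdj_eq_of_ne_corner Δ h, gAdj_eq_of_ne_corner Δ hb, gAdj_eq_of_ne_corner Δ hc,
    gAdj_eq_of_ne_corner Δ hd, gAdj_corner_succ_succ Δ L₁ L₂ (s + 1) t (by omega),
    gAdj_corner_succ_succ Δ L₁ L₂ s (t + 1) (by omega),
    gAdj_corner_succ_succ Δ L₁ L₂ (s + 1) (t + 1) (by omega)]
  ring
termination_by L₁ + L₂ + 2 - (s + t)

def setEntry (Δ : ℕ → ℕ → ℝ) (a b : ℕ) (v : ℝ) : ℕ → ℕ → ℝ :=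
  fun i j => if i = a ∧ j = b then v else Δ i j

@[simp]
theorem setEntry_apply_self (Δ : ℕ → ℕ → ℝ) (a b : ℕ) (v : ℝ) : setEntry Δ a b v a b = v :=
  if_pos ⟨rfl, rfl⟩

theorem setEntry_apply_of_ne (Δ : ℕ → ℕ → ℝ) {a b i j : ℕ} (v : ℝ) (h : ¬(i = a ∧ j = b)) :
    setEntry Δ a b v i j = Δ i j :=
  if_neg h

@[simp]
theorem setEntry_self (Δ : ℕ → ℕ → ℝ) (a b : ℕ) : setEntry Δ a b (Δ a b) = Δ := by
  funext i j
  by_cases h : i = a ∧ j = b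
  · rw [h.1, h.2, setEntry_apply_self]
  · exact setEntry_apply_of_ne Δ _ h

theorem hasDerivAt_khat_setEntry (Δ : ℕ → ℕ → ℝ) (a b : ℕ) :
    ∀ i j, HasDerivAt (fun v => khat (setEntry Δ a b v) i j)
      (gAdj Δ i j (a + 1) (b + 1) *
        ((khat Δ (a + 1) b + khat Δ a (b + 1)) * (1 / 2 + Δ a b / 6) +
          khat Δ a b * (Δ a b / 6)))
      (Δ a b)
  | i, 0 => by simpa using hasDerivAt_const (Δ a b) (1 : ℝ)
  | 0, j + 1 => by simpa using hasDerivAt_const (Δ a b) (1 : ℝ)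
  | i + 1, j + 1 => by
    have h₁ := hasDerivAt_khat_setEntry Δ a b (i + 1) j
    have h₂ := hasDerivAt_khat_setEntry Δ a b i (j + 1)
    have h₃ := hasDerivAt_khat_setEntry Δ a b i j
    simp only [khat_succ_succ]
    by_cases hab : i = a ∧ j = b
    · obtain ⟨rfl, rfl⟩ := hab
      simp only [setEntry_apply_self]
      refine (((h₁.add h₂).mul (hasDerivAt_Afun _)).sub (h₃.mul (hasDerivAt_Bfun _))).congr_deriv ?_
      simp
    · simp only [setEntry_apply_of_ne Δ _ hab]
      refine (((h₁.add h₂).mul_const _).sub (h₃.mul_const _)).congr_deriv ?_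
      rw [gAdj_corner_succ_succ Δ i j (a + 1) (b + 1) (by omega)]
      ring
termination_by i j => i + j

theorem adjoint_backprop_exact_gradient_general (L₁ L₂ : ℕ) (Δ : ℕ → ℕ → ℝ) :
    (∃ P : MvPolynomial (Fin L₁ × Fin L₂) ℝ,
      ∀ Δ' : ℕ → ℕ → ℝ, khat Δ' L₁ L₂ =
        MvPolynomial.eval (fun p => Δ' p.1.val p.2.val) P) ∧
    ∀ a < L₁, ∀ b < L₂,
      HasDerivAt
        (fun v : ℝ => khat (fun i j => if i = a ∧ j = b then v else Δ i j) L₁ L₂)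
        (gAdj Δ L₁ L₂ (a + 1) (b + 1) *
          ((khat Δ (a + 1) b + khat Δ a (b + 1)) * (1 / 2 + Δ a b / 6) +
            khat Δ a b * (Δ a b / 6)))
        (Δ a b) :=
  ⟨khat_exists_mvPolynomial L₁ L₂ le_rfl le_rfl,
    fun a _ b _ => hasDerivAt_khat_setEntry Δ a b L₁ L₂⟩

/-- **Exactness of the adjoint recurrence for backpropagation through the
signature-kernel finite-difference scheme.**  For fixed `L₁, L₂ ≥ 1` and
`Δ ∈ ℝ^{L₁ × L₂}`, the final grid value `k̂_{L₁,L₂}` is a polynomial function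
of the entries `Δ_{a,b}` (`0 ≤ a ≤ L₁−1`, `0 ≤ b ≤ L₂−1`), and its partial
derivative with respect to `Δ_{a,b}` equals
`g_{a+1,b+1} · [(k̂_{a+1,b} + k̂_{a,b+1})·(1/2 + Δ_{a,b}/6) + k̂_{a,b}·Δ_{a,b}/6]`,
where `g` is the adjoint grid. -/
theorem adjoint_backprop_exact_gradient (L₁ L₂ : ℕ) (hL₁ : 0 < L₁)
    (hL₂ : 0 < L₂) (Δ : ℕ → ℕ → ℝ) :
    (∃ P : MvPolynomial (Fin L₁ × Fin L₂) ℝ,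
      ∀ Δ' : ℕ → ℕ → ℝ, khat Δ' L₁ L₂ =
        MvPolynomial.eval (fun p => Δ' p.1.val p.2.val) P) ∧
    ∀ a < L₁, ∀ b < L₂,
      HasDerivAt
        (fun v : ℝ => khat (fun i j => if i = a ∧ j = b then v else Δ i j) L₁ L₂)
        (gAdj Δ L₁ L₂ (a + 1) (b + 1) *
          ((khat Δ (a + 1) b + khat Δ a (b + 1)) * (1 / 2 + Δ a b / 6) +
            khat Δ a b * (Δ a b / 6)))
        (Δ a b) :=
  adjoint_backprop_exact_gradient_general L₁ L₂ Δ
end
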